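/- Under the hypotheses of the perturbed closed loop (ẋ = f̂(x) + û(x) + e(t) with Sontag feedback û built from ρ(y) = ρ₀·√(a(y)² + ‖∇V(y)‖⁴), ρ₀ > 0, disturbance bound ‖e(t)‖² ≤ κ with κ > 0, and λ > 0 with ⟨x, P₀ x⟩ ≥ λ‖x‖² for all x), every differentiable solution x : [0,∞) → ℝ^d of the perturbed closed loop satisfies limsup_{t→∞} V(x(t)) ≤ 2κ/(λ ρ₀²); i.e. the trajectories are globally uniformly ultimately bounded and converge to the compact sublevel set {y : V(y) ≤ 2κ/(λ ρ₀²)}. -/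

import Mathlib

open scoped RealInnerProductSpace BigOperators

/-- Action of a `d × d` real matrix on `ℝ^d` (Euclidean space). -/
noncomputable def mApp {d : ℕ} (P : Matrix (Fin d) (Fin d) ℝ)
    (x : EuclideanSpace ℝ (Fin d)) : EuclideanSpace ℝ (Fin d) :=
  Matrix.toEuclideanLin P x

/-- `σ(x) = ⟨x, P(x − μ)⟩`. -/
noncomputable def sig {d : ℕ} (P : Matrix (Fin d) (Fin d) ℝ)
    (μ x : EuclideanSpace ℝ (Fin d)) : ℝ :=
  ⟪x, mApp P (x - μ)⟫

/-- Candidate control Lyapunov function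
`V(x) = ⟨x, P₀ x⟩ + Σ_{l=1}^{L} max(σ_l(x), 0)²`. -/
noncomputable def V {d L : ℕ} (P₀ : Matrix (Fin d) (Fin d) ℝ)
    (P : Fin L → Matrix (Fin d) (Fin d) ℝ) (μ : Fin L → EuclideanSpace ℝ (Fin d))
    (x : EuclideanSpace ℝ (Fin d)) : ℝ :=
  ⟪x, mApp P₀ x⟫ + ∑ l, max (sig (P l) (μ l) x) 0 ^ 2

/-- The gradient formula
`∇V(x) = 2 P₀ x + 2 Σ_{l=1}^{L} max(σ_l(x), 0) · P_l (2x − μ_l)`. -/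
noncomputable def gradV {d L : ℕ} (P₀ : Matrix (Fin d) (Fin d) ℝ)
    (P : Fin L → Matrix (Fin d) (Fin d) ℝ) (μ : Fin L → EuclideanSpace ℝ (Fin d))
    (x : EuclideanSpace ℝ (Fin d)) : EuclideanSpace ℝ (Fin d) :=
  (2 : ℝ) • mApp P₀ x +
    (2 : ℝ) • ∑ l, max (sig (P l) (μ l) x) 0 • mApp (P l) ((2 : ℝ) • x - μ l)

/-- `a(y) = ⟨∇V(y), f̂(y)⟩`. -/
noncomputable def aFun {d L : ℕ} (P₀ : Matrix (Fin d) (Fin d) ℝ)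
    (P : Fin L → Matrix (Fin d) (Fin d) ℝ) (μ : Fin L → EuclideanSpace ℝ (Fin d))
    (fhat : EuclideanSpace ℝ (Fin d) → EuclideanSpace ℝ (Fin d))
    (y : EuclideanSpace ℝ (Fin d)) : ℝ :=
  ⟪gradV P₀ P μ y, fhat y⟫

/-- `ρ(y) = ρ₀·√(a(y)² + ‖∇V(y)‖⁴)`. -/
noncomputable def rhoFun {d L : ℕ} (P₀ : Matrix (Fin d) (Fin d) ℝ)
    (P : Fin L → Matrix (Fin d) (Fin d) ℝ) (μ : Fin L → EuclideanSpace ℝ (Fin d))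
    (fhat : EuclideanSpace ℝ (Fin d) → EuclideanSpace ℝ (Fin d)) (ρ₀ : ℝ)
    (y : EuclideanSpace ℝ (Fin d)) : ℝ :=
  ρ₀ * Real.sqrt (aFun P₀ P μ fhat y ^ 2 + ‖gradV P₀ P μ y‖ ^ 4)

open Classical in
/-- The Sontag feedback: `û(y) = −(a(y) + ρ(y))·∇V(y)/‖∇V(y)‖²` if `∇V(y) ≠ 0` and
`a(y) + ρ(y) > 0`, and `û(y) = 0` otherwise. -/
noncomputable def uhat {d L : ℕ} (P₀ : Matrix (Fin d) (Fin d) ℝ)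
    (P : Fin L → Matrix (Fin d) (Fin d) ℝ) (μ : Fin L → EuclideanSpace ℝ (Fin d))
    (fhat : EuclideanSpace ℝ (Fin d) → EuclideanSpace ℝ (Fin d)) (ρ₀ : ℝ)
    (y : EuclideanSpace ℝ (Fin d)) : EuclideanSpace ℝ (Fin d) :=
  if gradV P₀ P μ y ≠ 0 ∧ 0 < aFun P₀ P μ fhat y + rhoFun P₀ P μ fhat ρ₀ y then
    (-((aFun P₀ P μ fhat y + rhoFun P₀ P μ fhat ρ₀ y) / ‖gradV P₀ P μ y‖ ^ 2)) •
      gradV P₀ P μ y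
  else 0


/-!
Along the closed loop, Sontag's feedback gives `⟪∇V, f̂ + û⟫ ≤ -ρ₀‖∇V‖²`, and Young's inequality
absorbs the disturbance: `⟪∇V, e⟫ ≤ ρ₀‖∇V‖²/2 + κ/(2ρ₀)`. Since each `P_l` is positive semidefinite,
`⟪∇V(y), y⟫ ≥ 2V(y)`, which together with `V(y) ≥ λ‖y‖²` gives `‖∇V(y)‖² ≥ 4λV(y)`. Hence
`d/dt V(x(t)) ≤ -2λρ₀ V(x(t)) + κ/(2ρ₀)`, so `V(x(t))` is eventually below any level above
`κ/(4λρ₀²)`, in particular below `2κ/(λρ₀²)`.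
-/

open Filter Topology

theorem hasDerivAt_max_zero_sq (s : ℝ) :
    HasDerivAt (fun u : ℝ => max u 0 ^ 2) (2 * max s 0) s := by
  rcases lt_trichotomy s 0 with hs | rfl | hs
  · have hloc : (fun u : ℝ => max u 0 ^ 2) =ᶠ[𝓝 s] fun _ => 0 := by
      filter_upwards [eventually_lt_nhds hs] with u hu
      simp [max_eq_right hu.le]
    simpa [max_eq_right hs.le] using (hasDerivAt_const s (0 : ℝ)).congr_of_eventuallyEq hloc
  · rw [hasDerivAt_iff_isLittleO_nhds_zero]
    simp only [zero_add, max_self, mul_zero, smul_zero, sub_zero, ne_eq, OfNat.ofNat_ne_zero,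
      not_false_eq_true, zero_pow]
    refine (Asymptotics.IsBigO.of_bound 1 (Eventually.of_forall fun u => ?_)).trans_isLittleO
      (Asymptotics.isLittleO_pow_id (n := 2) one_lt_two)
    rcases le_total u 0 with hu | hu <;> simp [hu, sq_nonneg]
  · have hloc : (fun u : ℝ => max u 0 ^ 2) =ᶠ[𝓝 s] fun u => u ^ 2 := by
      filter_upwards [eventually_gt_nhds hs] with u hu
      simp [max_eq_left hu.le]
    simpa [max_eq_left hs.le] using (hasDerivAt_pow 2 s).congr_of_eventuallyEq hloc

theorem real_inner_le_mul_norm_sq_add {E : Type*} [NormedAddCommGroup E] [InnerProductSpace ℝ E]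
    {c : ℝ} (hc : 0 < c) (u v : E) : ⟪u, v⟫ ≤ c / 2 * ‖u‖ ^ 2 + ‖v‖ ^ 2 / (2 * c) := by
  have hsq : 0 ≤ (c * ‖u‖ - ‖v‖) ^ 2 / (2 * c) := by positivity
  have hexp : (c * ‖u‖ - ‖v‖) ^ 2 / (2 * c) = c / 2 * ‖u‖ ^ 2 + ‖v‖ ^ 2 / (2 * c) - ‖u‖ * ‖v‖ := by
    field_simp
    ring
  linarith [real_inner_le_norm u v]

theorem eventually_le_of_hasDerivAt_le_neg_mul_add {W W' : ℝ → ℝ} {α β c : ℝ} (hα : 0 < α)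
    (hc : β / α < c) (hW : ∀ t, 0 ≤ t → HasDerivAt W (W' t) t)
    (hW' : ∀ t, 0 ≤ t → W' t ≤ -α * W t + β) : ∀ᶠ t in atTop, W t ≤ c := by
  set b := β / α
  -- integrating factor
  have hanti : AntitoneOn (fun t => Real.exp (α * t) * (W t - b)) (Set.Ici 0) := by
    have hderiv : ∀ t, 0 ≤ t → HasDerivAt (fun t => Real.exp (α * t) * (W t - b))
        (Real.exp (α * t) * (α * (W t - b) + W' t)) t := fun t ht => by
      have hexp : HasDerivAt (fun t => Real.exp (α * t)) (Real.exp (α * t) * α) t := by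
        simpa using ((hasDerivAt_id t).const_mul α).exp
      exact (hexp.fun_mul ((hW t ht).sub_const b)).congr_deriv (by ring)
    refine antitoneOn_of_hasDerivWithinAt_nonpos (convex_Ici 0)
      (fun t ht => (hderiv t ht).continuousAt.continuousWithinAt)
      (fun t ht => (hderiv t (interior_subset ht)).hasDerivWithinAt) fun t ht => ?_
    have hb : α * b = β := mul_div_cancel₀ β hα.ne'
    have := hW' t (interior_subset ht)
    exact mul_nonpos_of_nonneg_of_nonpos (Real.exp_pos _).le (by nlinarith)
  have hdecay : Tendsto (fun t => Real.exp (-(α * t)) * (W 0 - b)) atTop (𝓝 0) := by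
    simpa using (Real.tendsto_exp_neg_atTop_nhds_zero.comp
      (tendsto_id.const_mul_atTop hα)).mul_const (W 0 - b)
  filter_upwards [hdecay.eventually (gt_mem_nhds (sub_pos.2 hc)), eventually_ge_atTop 0]
    with t hsmall ht
  have hle : Real.exp (α * t) * (W t - b) ≤ W 0 - b := by
    simpa using hanti Set.self_mem_Ici ht ht
  have hWt : W t - b ≤ Real.exp (-(α * t)) * (W 0 - b) := by
    rw [Real.exp_neg, ← div_eq_inv_mul, le_div_iff₀' (Real.exp_pos _)]
    exact hle
  linarith

section MatrixAction

variable {d : ℕ} {P : Matrix (Fin d) (Fin d) ℝ}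

theorem mApp_sub (P : Matrix (Fin d) (Fin d) ℝ) (x y : EuclideanSpace ℝ (Fin d)) :
    mApp P (x - y) = mApp P x - mApp P y :=
  map_sub _ x y

theorem Matrix.IsHermitian.inner_mApp_left (hP : P.IsHermitian) (x y : EuclideanSpace ℝ (Fin d)) :
    ⟪mApp P x, y⟫ = ⟪x, mApp P y⟫ :=
  Matrix.isSymmetric_toEuclideanLin_iff.mpr hP x y

theorem Matrix.PosSemidef.inner_mApp_self_nonneg (hP : P.PosSemidef)
    (x : EuclideanSpace ℝ (Fin d)) : 0 ≤ ⟪x, mApp P x⟫ :=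
  (Matrix.isPositive_toEuclideanLin_iff.mpr hP).inner_nonneg_right x

theorem HasDerivAt.mApp (P : Matrix (Fin d) (Fin d) ℝ) {x : ℝ → EuclideanSpace ℝ (Fin d)}
    {v : EuclideanSpace ℝ (Fin d)} {t : ℝ} (hx : HasDerivAt x v t) :
    HasDerivAt (fun s => _root_.mApp P (x s)) (_root_.mApp P v) t :=
  (LinearMap.toContinuousLinearMap (Matrix.toEuclideanLin P)).hasFDerivAt.comp_hasDerivAt t hx

end MatrixAction

section Lyapunov

variable {d L : ℕ} (P₀ : Matrix (Fin d) (Fin d) ℝ) (P : Fin L → Matrix (Fin d) (Fin d) ℝ)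
  (μ : Fin L → EuclideanSpace ℝ (Fin d))

theorem hasDerivAt_V_comp (hP₀ : P₀.IsHermitian) (hP : ∀ l, (P l).IsHermitian)
    {x : ℝ → EuclideanSpace ℝ (Fin d)} {v : EuclideanSpace ℝ (Fin d)} {t : ℝ}
    (hx : HasDerivAt x v t) :
    HasDerivAt (fun s => V P₀ P μ (x s)) ⟪gradV P₀ P μ (x t), v⟫ t := by
  have hsig : ∀ l, HasDerivAt (fun s => sig (P l) (μ l) (x s))
      (⟪x t, mApp (P l) v⟫ + ⟪v, mApp (P l) (x t - μ l)⟫) t := fun l =>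
    hx.inner ℝ ((hx.sub_const (μ l)).mApp (P l))
  refine ((hx.inner ℝ (hx.mApp P₀)).add (HasDerivAt.fun_sum fun l _ =>
    (hasDerivAt_max_zero_sq _).comp t (hsig l))).congr_deriv ?_
  have hswap : ∀ A : Matrix (Fin d) (Fin d) ℝ, A.IsHermitian → ∀ y,
      ⟪v, mApp A y⟫ = ⟪y, mApp A v⟫ := fun A hA y => by
    rw [real_inner_comm, hA.inner_mApp_left]
  simp only [gradV, inner_add_left, real_inner_smul_left, sum_inner, hswap P₀ hP₀,
    hP₀.inner_mApp_left, Finset.mul_sum]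
  congr 1
  · ring
  refine Finset.sum_congr rfl fun l _ => ?_
  rw [hswap _ (hP l), (hP l).inner_mApp_left, inner_sub_left, inner_sub_left,
    real_inner_smul_left]
  ring

theorem Matrix.IsHermitian.inner_mApp_two_smul_sub {P : Matrix (Fin d) (Fin d) ℝ}
    (hP : P.IsHermitian) (μ y : EuclideanSpace ℝ (Fin d)) :
    ⟪mApp P ((2 : ℝ) • y - μ), y⟫ = ⟪y, mApp P y⟫ + sig P μ y := by
  rw [hP.inner_mApp_left, sig, mApp_sub, inner_sub_left, inner_sub_right, real_inner_smul_left,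
    ← hP.inner_mApp_left μ y, real_inner_comm (mApp P μ)]
  ring

theorem two_mul_V_le_inner_gradV_self (hP : ∀ l, (P l).PosSemidef) (y : EuclideanSpace ℝ (Fin d)) :
    2 * V P₀ P μ y ≤ ⟪gradV P₀ P μ y, y⟫ := by
  have hterm : ∀ l, max (sig (P l) (μ l) y) 0 ^ 2 ≤
      ⟪max (sig (P l) (μ l) y) 0 • mApp (P l) ((2 : ℝ) • y - μ l), y⟫ := fun l => by
    rw [real_inner_smul_left, (hP l).isHermitian.inner_mApp_two_smul_sub]
    have hquad := (hP l).inner_mApp_self_nonneg y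
    rcases le_total (sig (P l) (μ l) y) 0 with hs | hs
    · simp [max_eq_right hs]
    · rw [max_eq_left hs]
      nlinarith
  rw [V, gradV, inner_add_left, real_inner_smul_left, real_inner_smul_left, sum_inner,
    real_inner_comm (mApp P₀ y)]
  linarith [Finset.sum_le_sum fun l (_ : l ∈ Finset.univ) => hterm l]

theorem mul_norm_sq_le_V {lam : ℝ}
    (hlb : ∀ x : EuclideanSpace ℝ (Fin d), lam * ‖x‖ ^ 2 ≤ ⟪x, mApp P₀ x⟫)
    (y : EuclideanSpace ℝ (Fin d)) : lam * ‖y‖ ^ 2 ≤ V P₀ P μ y :=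
  (hlb y).trans (le_add_of_nonneg_right (Finset.sum_nonneg fun _ _ => sq_nonneg _))

theorem four_mul_mul_V_le_norm_gradV_sq (hP : ∀ l, (P l).PosSemidef) {lam : ℝ} (hlam : 0 ≤ lam)
    (hlb : ∀ x : EuclideanSpace ℝ (Fin d), lam * ‖x‖ ^ 2 ≤ ⟪x, mApp P₀ x⟫)
    (y : EuclideanSpace ℝ (Fin d)) :
    4 * lam * V P₀ P μ y ≤ ‖gradV P₀ P μ y‖ ^ 2 := by
  set g := ‖gradV P₀ P μ y‖
  have hVy := mul_norm_sq_le_V P₀ P μ hlb y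
  have hV : 0 ≤ V P₀ P μ y := (by positivity : 0 ≤ lam * ‖y‖ ^ 2).trans hVy
  have hgy : 2 * V P₀ P μ y ≤ g * ‖y‖ :=
    (two_mul_V_le_inner_gradV_self P₀ P μ hP y).trans (real_inner_le_norm _ _)
  -- `4λV² ≤ λ (g ‖y‖)² ≤ g² V`, then divide by `V`.
  have hsq : 4 * lam * V P₀ P μ y * V P₀ P μ y ≤ g ^ 2 * V P₀ P μ y := by
    have h1 : 4 * V P₀ P μ y ^ 2 ≤ (g * ‖y‖) ^ 2 := by nlinarith
    nlinarith [mul_le_mul_of_nonneg_left hVy (sq_nonneg g), mul_le_mul_of_nonneg_left h1 hlam]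
  rcases hV.eq_or_lt with h0 | hpos
  · rw [← h0, mul_zero]
    positivity
  · exact le_of_mul_le_mul_right hsq hpos

variable (fhat : EuclideanSpace ℝ (Fin d) → EuclideanSpace ℝ (Fin d)) {ρ₀ : ℝ}

theorem mul_norm_gradV_sq_le_rhoFun (hρ₀ : 0 ≤ ρ₀) (y : EuclideanSpace ℝ (Fin d)) :
    ρ₀ * ‖gradV P₀ P μ y‖ ^ 2 ≤ rhoFun P₀ P μ fhat ρ₀ y := by
  refine mul_le_mul_of_nonneg_left (Real.le_sqrt_of_sq_le ?_) hρ₀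
  nlinarith [sq_nonneg (aFun P₀ P μ fhat y)]

theorem inner_gradV_add_uhat_le (hρ₀ : 0 ≤ ρ₀) (y : EuclideanSpace ℝ (Fin d)) :
    ⟪gradV P₀ P μ y, fhat y + uhat P₀ P μ fhat ρ₀ y⟫ ≤ -(ρ₀ * ‖gradV P₀ P μ y‖ ^ 2) := by
  have hρ := mul_norm_gradV_sq_le_rhoFun P₀ P μ fhat hρ₀ y
  have ha : ⟪gradV P₀ P μ y, fhat y⟫ = aFun P₀ P μ fhat y := rfl
  rw [inner_add_right, ha, uhat]
  split_ifs with h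
  · rw [real_inner_smul_right, real_inner_self_eq_norm_sq, neg_mul,
      div_mul_cancel₀ _ (pow_ne_zero 2 (norm_ne_zero_iff.mpr h.1))]
    linarith
  · rw [inner_zero_right, add_zero]
    by_cases hg : gradV P₀ P μ y = 0
    · simp [aFun, hg]
    · linarith [not_lt.mp (not_and.mp h hg)]

theorem inner_gradV_closedLoop_le (hP : ∀ l, (P l).PosSemidef) (hρ₀ : 0 < ρ₀) {lam : ℝ}
    (hlam : 0 ≤ lam) (hlb : ∀ x : EuclideanSpace ℝ (Fin d), lam * ‖x‖ ^ 2 ≤ ⟪x, mApp P₀ x⟫)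
    (y e : EuclideanSpace ℝ (Fin d)) :
    ⟪gradV P₀ P μ y, fhat y + uhat P₀ P μ fhat ρ₀ y + e⟫ ≤
      -(2 * lam * ρ₀) * V P₀ P μ y + ‖e‖ ^ 2 / (2 * ρ₀) := by
  have hgrad := four_mul_mul_V_le_norm_gradV_sq P₀ P μ hP hlam hlb y
  rw [inner_add_right]
  nlinarith [inner_gradV_add_uhat_le P₀ P μ fhat hρ₀.le y,
    real_inner_le_mul_norm_sq_add hρ₀ (gradV P₀ P μ y) e]

end Lyapunov

/-- under the hypotheses of the perturbed closed loop (Sontag feedback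
`û`, `ρ₀ > 0`, disturbance bound `‖e(t)‖² ≤ κ`, `κ > 0`, and `λ > 0` with
`⟨x, P₀ x⟩ ≥ λ‖x‖²`), every differentiable solution satisfies
`limsup_{t→∞} V(x(t)) ≤ 2κ/(λ ρ₀²)`; i.e. the trajectories are globally uniformly
ultimately bounded and converge to the sublevel set `{y : V(y) ≤ 2κ/(λ ρ₀²)}`. -/
theorem stmt_16 {d L : ℕ} (P₀ : Matrix (Fin d) (Fin d) ℝ)
    (P : Fin L → Matrix (Fin d) (Fin d) ℝ) (μ : Fin L → EuclideanSpace ℝ (Fin d))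
    (hP₀ : P₀.PosDef) (hP : ∀ l, (P l).PosDef)
    (fhat : EuclideanSpace ℝ (Fin d) → EuclideanSpace ℝ (Fin d))
    (ρ₀ : ℝ) (hρ₀ : 0 < ρ₀) (κ : ℝ) (hκ : 0 < κ)
    (lam : ℝ) (hlam : 0 < lam)
    (hlb : ∀ x : EuclideanSpace ℝ (Fin d), lam * ‖x‖ ^ 2 ≤ ⟪x, mApp P₀ x⟫)
    (e : ℝ → EuclideanSpace ℝ (Fin d)) (he : ∀ t : ℝ, 0 ≤ t → ‖e t‖ ^ 2 ≤ κ)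
    (x : ℝ → EuclideanSpace ℝ (Fin d))
    (hx : ∀ t : ℝ, 0 ≤ t →
      HasDerivAt x (fhat (x t) + uhat P₀ P μ fhat ρ₀ (x t) + e t) t) :
    Filter.limsup (fun t : ℝ => V P₀ P μ (x t)) Filter.atTop ≤ 2 * κ / (lam * ρ₀ ^ 2) ∧
      ∀ ε : ℝ, 0 < ε → ∀ᶠ t : ℝ in Filter.atTop,
        V P₀ P μ (x t) ≤ 2 * κ / (lam * ρ₀ ^ 2) + ε := by
  have hbound : κ / (2 * ρ₀) / (2 * lam * ρ₀) < 2 * κ / (lam * ρ₀ ^ 2) := by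
    have hden : 0 < lam * ρ₀ ^ 2 := by positivity
    rw [div_div, div_lt_div_iff₀ (by positivity) hden]
    nlinarith [mul_pos hκ hden]
  have hev : ∀ᶠ t in atTop, V P₀ P μ (x t) ≤ 2 * κ / (lam * ρ₀ ^ 2) :=
    eventually_le_of_hasDerivAt_le_neg_mul_add (by positivity) hbound
      (fun t ht => hasDerivAt_V_comp P₀ P μ hP₀.isHermitian (fun l => (hP l).isHermitian)
        (hx t ht))
      fun t ht => (inner_gradV_closedLoop_le P₀ P μ fhat (fun l => (hP l).posSemidef) hρ₀
        hlam.le hlb (x t) (e t)).trans (by gcongr; exact he t ht)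
  have hV : ∀ t, 0 ≤ V P₀ P μ (x t) := fun t =>
    (by positivity : 0 ≤ lam * ‖x t‖ ^ 2).trans (mul_norm_sq_le_V P₀ P μ hlb (x t))
  exact ⟨limsup_le_of_le (isCoboundedUnder_le_of_le atTop hV) hev,
    fun ε hε => hev.mono fun t ht => by linarith⟩
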